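/- Let A be any generalized Cartan matrix on I = {1,…,n} and let ι = (i_r)_{r≥1} satisfy (seq-con) and be adapted to A. Fix r ≥ 1, set k = i_r, and let s be the number of indices m ≤ r with i_m = k. Then for every j ∈ I with a_{k,j} < 0 there is exactly one index m_j with r < m_j < r^{(+)} and i_{m_j} = j; moreover the number of indices m ≤ m_j with i_m = j equals s + p_{j,k}, where p_{j,k} = 1 if the first occurrence of j in ι precedes the first occurrence of k and p_{j,k} = 0 otherwise. Consequently β_r = x_r + x_{r^{(+)}} + Σ_{j : a_{k,j} < 0} a_{k,j} x_{m_j}. -/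
import Mathlib


noncomputable section

open Finsupp

/-- `r⁺`: the least `m > r` with `ι m = ι r`. -/
def rPlus (ι : ℕ → ℕ) (r : ℕ) : ℕ := sInf {m | r < m ∧ ι m = ι r}

/-- `r⁻`: the greatest `m` with `1 ≤ m < r` and `ι m = ι r`, or `0` if none. -/
def rMinus (ι : ℕ → ℕ) (r : ℕ) : ℕ := sSup {m | 1 ≤ m ∧ m < r ∧ ι m = ι r}

/-- The linear form `β_r = x_r + Σ_{r<m<r⁺} a_{i_r,i_m} x_m + x_{r⁺}`, with `β_0 = 0`. -/
def betaForm (A : ℕ → ℕ → ℤ) (ι : ℕ → ℕ) (r : ℕ) : ℕ →₀ ℚ :=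
  if r = 0 then 0
  else Finsupp.single r 1 + Finsupp.single (rPlus ι r) 1 +
    ∑ m ∈ Finset.Ioo r (rPlus ι r), (A (ι r) (ι m) : ℚ) • Finsupp.single m 1

/-- The operator `S'_r` on linear forms. -/
def Sop (A : ℕ → ℕ → ℤ) (ι : ℕ → ℕ) (r : ℕ) (φ : ℕ →₀ ℚ) : ℕ →₀ ℚ :=
  if 0 < φ r then φ - betaForm A ι r
  else if φ r < 0 then φ + betaForm A ι (rMinus ι r)
  else φ

/-- `Ξ'_ι`: the smallest set of linear forms containing each `x_j` (`j ≥ 1`)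
and stable under every `S'_r` (`r ≥ 1`). -/
inductive XiMem (A : ℕ → ℕ → ℤ) (ι : ℕ → ℕ) : (ℕ →₀ ℚ) → Prop
  | coord (j : ℕ) (hj : 1 ≤ j) : XiMem A ι (Finsupp.single j 1)
  | step (r : ℕ) (hr : 1 ≤ r) (φ : ℕ →₀ ℚ) (h : XiMem A ι φ) : XiMem A ι (Sop A ι r φ)

/-- Condition (seq-con): `ι` takes values in `{1,…,n}`, has no equal consecutive terms,
and every letter occurs infinitely often. -/
def SeqCon (n : ℕ) (ι : ℕ → ℕ) : Prop :=
  (∀ r, 1 ≤ r → 1 ≤ ι r ∧ ι r ≤ n) ∧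
  (∀ r, 1 ≤ r → ι r ≠ ι (r + 1)) ∧
  (∀ k, 1 ≤ k → k ≤ n → ∀ N : ℕ, ∃ r, N ≤ r ∧ 1 ≤ r ∧ ι r = k)

/-- `ι` is adapted to `A`: for `i ≠ j` with `a_{i,j} < 0`, consecutive members of the
subsequence of `ι` consisting of the letters `i`, `j` are distinct. -/
def Adapted (n : ℕ) (A : ℕ → ℕ → ℤ) (ι : ℕ → ℕ) : Prop :=
  ∀ i j, 1 ≤ i → i ≤ n → 1 ≤ j → j ≤ n → i ≠ j → A i j < 0 →
    ∀ r s, 1 ≤ r → r < s → (ι r = i ∨ ι r = j) → (ι s = i ∨ ι s = j) →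
      (∀ m, r < m → m < s → ι m ≠ i ∧ ι m ≠ j) → ι r ≠ ι s

/-- The `Ξ'`-positivity condition. -/
def XiPositivity (A : ℕ → ℕ → ℤ) (ι : ℕ → ℕ) : Prop :=
  ∀ φ : ℕ →₀ ℚ, XiMem A ι φ → ∀ ℓ, 1 ≤ ℓ → rMinus ι ℓ = 0 → 0 ≤ φ ℓ

/-- `ι^{(k)}`: the first position `r ≥ 1` with `ι r = k`. -/
def iotaFirst (ι : ℕ → ℕ) (k : ℕ) : ℕ := sInf {r | 1 ≤ r ∧ ι r = k}

/-- A generalized Cartan matrix on `{1,…,n}`. -/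
def IsGCM (n : ℕ) (A : ℕ → ℕ → ℤ) : Prop :=
  (∀ i, 1 ≤ i → i ≤ n → A i i = 2) ∧
  (∀ i j, 1 ≤ i → i ≤ n → 1 ≤ j → j ≤ n → i ≠ j → A i j ≤ 0) ∧
  (∀ i j, 1 ≤ i → i ≤ n → 1 ≤ j → j ≤ n → (A i j = 0 ↔ A j i = 0))

def cnt (ι : ℕ → ℕ) (j m : ℕ) : ℕ := ((Finset.Icc 1 m).filter (fun t => ι t = j)).card

lemma cnt_congr {ι : ℕ → ℕ} {j a b : ℕ} (hab : a ≤ b) (h : ∀ m, a < m → m ≤ b → ι m ≠ j) :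
    cnt ι j b = cnt ι j a := by
  unfold cnt
  congr 1
  apply Finset.ext
  intro m
  simp only [Finset.mem_filter, Finset.mem_Icc]
  constructor
  · rintro ⟨⟨h1, h2⟩, h3⟩
    refine ⟨⟨h1, ?_⟩, h3⟩
    by_contra hc
    exact h m (by omega) h2 h3
  · rintro ⟨⟨h1, h2⟩, h3⟩; exact ⟨⟨h1, le_trans h2 hab⟩, h3⟩

lemma cnt_succ {ι : ℕ → ℕ} {j a b : ℕ} (hab : a < b) (hb : ι b = j)
    (h : ∀ m, a < m → m < b → ι m ≠ j) :
    cnt ι j b = cnt ι j a + 1 := by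
  unfold cnt
  have heq : (Finset.Icc 1 b).filter (fun t => ι t = j)
      = insert b ((Finset.Icc 1 a).filter (fun t => ι t = j)) := by
    apply Finset.ext; intro m
    simp only [Finset.mem_insert, Finset.mem_filter, Finset.mem_Icc]
    constructor
    · rintro ⟨⟨h1, h2⟩, h3⟩
      rcases eq_or_lt_of_le h2 with he | hlt
      · exact Or.inl he
      · refine Or.inr ⟨⟨h1, ?_⟩, h3⟩
        by_contra hc; exact h m (by omega) hlt h3
    · rintro (rfl | ⟨⟨h1, h2⟩, h3⟩)
      · exact ⟨⟨by omega, le_rfl⟩, hb⟩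
      · exact ⟨⟨h1, by omega⟩, h3⟩
  rw [heq, Finset.card_insert_of_notMem]
  simp only [Finset.mem_filter, Finset.mem_Icc, not_and]
  intro ⟨_, h2⟩; omega

lemma alt_count {n : ℕ} {A : ℕ → ℕ → ℤ} {ι : ℕ → ℕ}
    (hseq : SeqCon n ι) (had : Adapted n A ι)
    (k j : ℕ) (hk1 : 1 ≤ k) (hkn : k ≤ n) (hj1 : 1 ≤ j) (hjn : j ≤ n)
    (hjk : k ≠ j) (hneg : A k j < 0) :
    ∀ t, 1 ≤ t →
      (ι t = j → cnt ι j t = cnt ι k t + (if iotaFirst ι j < iotaFirst ι k then 1 else 0)) ∧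
      (ι t = k → cnt ι k t + (if iotaFirst ι j < iotaFirst ι k then 1 else 0) = cnt ι j t + 1) := by
  intro t
  induction t using Nat.strong_induction_on with
  | _ t IH =>
  intro ht1
  by_cases hP : ∃ m, 1 ≤ m ∧ m < t ∧ (ι m = j ∨ ι m = k)
  · set P := {m | 1 ≤ m ∧ m < t ∧ (ι m = j ∨ ι m = k)} with hPdef
    have hPne : P.Nonempty := hP
    have hbdd : BddAbove P := ⟨t, fun m hm => le_of_lt hm.2.1⟩
    set t' := sSup P with ht'def
    have ht'mem : t' ∈ P := Nat.sSup_mem hPne hbdd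
    have ht'max : ∀ m ∈ P, m ≤ t' := fun m hm => le_csSup hbdd hm
    have hbetween : ∀ m, t' < m → m < t → ι m ≠ k ∧ ι m ≠ j := by
      intro m h1 h2
      constructor <;> intro hc
      · exact absurd (ht'max m ⟨by omega, h2, Or.inr hc⟩) (by omega)
      · exact absurd (ht'max m ⟨by omega, h2, Or.inl hc⟩) (by omega)
    have hIH := IH t' ht'mem.2.1 ht'mem.1
    constructor
    · intro hιt
      have hne : ι t' ≠ ι t :=
        had k j hk1 hkn hj1 hjn hjk hneg t' t ht'mem.1 ht'mem.2.1
          ht'mem.2.2.symm (Or.inr hιt) hbetween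
      have hιt' : ι t' = k := by
        rcases ht'mem.2.2 with h | h
        · exact absurd (h.trans hιt.symm) hne
        · exact h
      have h1 : cnt ι j t = cnt ι j t' + 1 :=
        cnt_succ ht'mem.2.1 hιt (fun m hm1 hm2 => (hbetween m hm1 hm2).2)
      have h2 : cnt ι k t = cnt ι k t' := by
        apply cnt_congr (le_of_lt ht'mem.2.1)
        intro m hm1 hm2
        rcases eq_or_lt_of_le hm2 with rfl | hlt
        · rw [hιt]; exact fun h => hjk h.symm
        · exact (hbetween m hm1 hlt).1
      have := hIH.2 hιt'
      omega
    · intro hιt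
      have hne : ι t' ≠ ι t :=
        had k j hk1 hkn hj1 hjn hjk hneg t' t ht'mem.1 ht'mem.2.1
          ht'mem.2.2.symm (Or.inl hιt) hbetween
      have hιt' : ι t' = j := by
        rcases ht'mem.2.2 with h | h
        · exact h
        · exact absurd (h.trans hιt.symm) hne
      have h1 : cnt ι k t = cnt ι k t' + 1 :=
        cnt_succ ht'mem.2.1 hιt (fun m hm1 hm2 => (hbetween m hm1 hm2).1)
      have h2 : cnt ι j t = cnt ι j t' := by
        apply cnt_congr (le_of_lt ht'mem.2.1)
        intro m hm1 hm2
        rcases eq_or_lt_of_le hm2 with rfl | hlt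
        · rw [hιt]; exact hjk
        · exact (hbetween m hm1 hlt).2
      have := hIH.1 hιt'
      omega
  · push_neg at hP
    have hnoprev : ∀ m, 1 ≤ m → m < t → ι m ≠ j ∧ ι m ≠ k := by
      intro m h1 h2
      have := hP m h1 h2
      tauto
    constructor
    · intro hιt
      have h1 : cnt ι j t = cnt ι j 0 + 1 :=
        cnt_succ (by omega) hιt (fun m hm1 hm2 => (hnoprev m (by omega) hm2).1)
      have h0 : cnt ι j 0 = 0 := by simp [cnt]
      have h2 : cnt ι k t = cnt ι k 0 := by
        apply cnt_congr (by omega)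
        intro m hm1 hm2
        rcases eq_or_lt_of_le hm2 with rfl | hlt
        · rw [hιt]; exact fun h => hjk h.symm
        · exact (hnoprev m (by omega) hlt).2
      have h0' : cnt ι k 0 = 0 := by simp [cnt]
      have hfj : iotaFirst ι j = t := by
        have hmem : iotaFirst ι j ∈ {r | 1 ≤ r ∧ ι r = j} := Nat.sInf_mem ⟨t, ht1, hιt⟩
        have hle : iotaFirst ι j ≤ t := Nat.sInf_le ⟨ht1, hιt⟩
        rcases eq_or_lt_of_le hle with he | hlt
        · exact he
        · exact absurd hmem.2 (hnoprev _ hmem.1 hlt).1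
      have hfk : t < iotaFirst ι k := by
        obtain ⟨m, _, hm1, hm2⟩ := hseq.2.2 k hk1 hkn 1
        have hmem : iotaFirst ι k ∈ {r | 1 ≤ r ∧ ι r = k} := Nat.sInf_mem ⟨m, hm1, hm2⟩
        rcases lt_trichotomy (iotaFirst ι k) t with hlt | he | hgt
        · exact absurd hmem.2 (hnoprev _ hmem.1 hlt).2
        · rw [he] at hmem; exact absurd (hmem.2.symm.trans hιt) hjk
        · exact hgt
      rw [if_pos (by omega)]
      omega
    · intro hιt
      have h1 : cnt ι k t = cnt ι k 0 + 1 :=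
        cnt_succ (by omega) hιt (fun m hm1 hm2 => (hnoprev m (by omega) hm2).2)
      have h0 : cnt ι k 0 = 0 := by simp [cnt]
      have h2 : cnt ι j t = cnt ι j 0 := by
        apply cnt_congr (by omega)
        intro m hm1 hm2
        rcases eq_or_lt_of_le hm2 with rfl | hlt
        · rw [hιt]; exact hjk
        · exact (hnoprev m (by omega) hlt).1
      have h0' : cnt ι j 0 = 0 := by simp [cnt]
      have hfk : iotaFirst ι k = t := by
        have hmem : iotaFirst ι k ∈ {r | 1 ≤ r ∧ ι r = k} := Nat.sInf_mem ⟨t, ht1, hιt⟩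
        have hle : iotaFirst ι k ≤ t := Nat.sInf_le ⟨ht1, hιt⟩
        rcases eq_or_lt_of_le hle with he | hlt
        · exact he
        · exact absurd hmem.2 (hnoprev _ hmem.1 hlt).2
      have hfj : t < iotaFirst ι j := by
        obtain ⟨m, _, hm1, hm2⟩ := hseq.2.2 j hj1 hjn 1
        have hmem : iotaFirst ι j ∈ {r | 1 ≤ r ∧ ι r = j} := Nat.sInf_mem ⟨m, hm1, hm2⟩
        rcases lt_trichotomy (iotaFirst ι j) t with hlt | he | hgt
        · exact absurd hmem.2 (hnoprev _ hmem.1 hlt).1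
        · rw [he] at hmem; exact absurd (hιt.symm.trans hmem.2) hjk
        · exact hgt
      rw [if_neg (by omega)]
      omega

theorem beta_description (n : ℕ) (A : ℕ → ℕ → ℤ) (hA : IsGCM n A)
    (ι : ℕ → ℕ) (hseq : SeqCon n ι) (had : Adapted n A ι)
    (r : ℕ) (hr : 1 ≤ r) (k : ℕ) (hk : k = ι r)
    (s : ℕ) (hs : s = ((Finset.Icc 1 r).filter (fun m => ι m = k)).card) :
    ∃ mfun : ℕ → ℕ,
      (∀ j, 1 ≤ j → j ≤ n → A k j < 0 →
        (r < mfun j ∧ mfun j < rPlus ι r ∧ ι (mfun j) = j) ∧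
        (∀ m, r < m → m < rPlus ι r → ι m = j → m = mfun j) ∧
        ((Finset.Icc 1 (mfun j)).filter (fun m => ι m = j)).card =
          s + (if iotaFirst ι j < iotaFirst ι k then 1 else 0)) ∧
      betaForm A ι r = Finsupp.single r 1 + Finsupp.single (rPlus ι r) 1 +
        ∑ j ∈ (Finset.Icc 1 n).filter (fun j => A k j < 0),
          (A k j : ℚ) • Finsupp.single (mfun j) 1 := by
  subst hk
  have hk1 : 1 ≤ ι r := (hseq.1 r hr).1
  have hkn : ι r ≤ n := (hseq.1 r hr).2
  have hne : {m | r < m ∧ ι m = ι r}.Nonempty := by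
    obtain ⟨m, hm1, hm2, hm3⟩ := hseq.2.2 (ι r) hk1 hkn (r + 1)
    exact ⟨m, by omega, hm3⟩
  have hRmem : r < rPlus ι r ∧ ι (rPlus ι r) = ι r := Nat.sInf_mem hne
  set R := rPlus ι r with hRdef
  obtain ⟨hrR, hιR⟩ := hRmem
  have hmin : ∀ m, r < m → m < R → ι m ≠ ι r := by
    intro m h1 h2 hc
    have : R ≤ m := Nat.sInf_le ⟨h1, hc⟩
    omega
  set mfun : ℕ → ℕ := fun j => sInf {m | r < m ∧ m < R ∧ ι m = j} with hmfun
  have key : ∀ j, 1 ≤ j → j ≤ n → A (ι r) j < 0 →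
      (r < mfun j ∧ mfun j < R ∧ ι (mfun j) = j) ∧
      (∀ m, r < m → m < R → ι m = j → m = mfun j) := by
    intro j hj1 hjn hneg
    have hjk : ι r ≠ j := by
      rintro rfl; have := hA.1 (ι r) hk1 hkn; omega
    have hSne : {m | r < m ∧ m < R ∧ ι m = j}.Nonempty := by
      by_contra hc
      have hnone : ∀ m, r < m → m < R → ι m ≠ j := fun m h1 h2 h3 => hc ⟨m, h1, h2, h3⟩
      exact had (ι r) j hk1 hkn hj1 hjn hjk hneg r R hr hrR (Or.inl rfl) (Or.inl hιR)
        (fun m h1 h2 => ⟨hmin m h1 h2, hnone m h1 h2⟩) hιR.symm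
    have hM : mfun j ∈ {m | r < m ∧ m < R ∧ ι m = j} := Nat.sInf_mem hSne
    refine ⟨hM, ?_⟩
    intro m h1 h2 h3
    have hle : mfun j ≤ m := Nat.sInf_le ⟨h1, h2, h3⟩
    rcases eq_or_lt_of_le hle with he | hlt
    · exact he.symm
    · exfalso
      have hTne : {u | mfun j < u ∧ u ≤ m ∧ ι u = j}.Nonempty := ⟨m, hlt, le_rfl, h3⟩
      have hT : sInf {u | mfun j < u ∧ u ≤ m ∧ ι u = j}
          ∈ {u | mfun j < u ∧ u ≤ m ∧ ι u = j} := Nat.sInf_mem hTne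
      have hM1 := hM.1
      have hM2 := hM.2.1
      have hT1 := hT.1
      have hT2 := hT.2.1
      exact had (ι r) j hk1 hkn hj1 hjn hjk hneg (mfun j)
        (sInf {u | mfun j < u ∧ u ≤ m ∧ ι u = j}) (by omega) hT1
        (Or.inr hM.2.2) (Or.inr hT.2.2)
        (fun u hu1 hu2 => ⟨hmin u (by omega) (by omega),
          fun hc => absurd (Nat.sInf_le (show u ∈ {u | mfun j < u ∧ u ≤ m ∧ ι u = j}
            from ⟨hu1, by omega, hc⟩)) (by omega)⟩)
        (hM.2.2.trans hT.2.2.symm)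
  refine ⟨mfun, ?_, ?_⟩
  · intro j hj1 hjn hneg
    obtain ⟨hM, huniq⟩ := key j hj1 hjn hneg
    refine ⟨hM, huniq, ?_⟩
    have hjk : ι r ≠ j := by
      rintro rfl; have := hA.1 (ι r) hk1 hkn; omega
    have hck : cnt ι (ι r) (mfun j) = cnt ι (ι r) r := by
      apply cnt_congr (le_of_lt hM.1)
      intro u h1 h2
      rcases eq_or_lt_of_le h2 with rfl | hlt
      · rw [hM.2.2]; exact fun h => hjk h.symm
      · exact hmin u h1 (by omega)
    have hM1 := hM.1
    have halt := (alt_count hseq had (ι r) j hk1 hkn hj1 hjn hjk hneg (mfun j)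
      (by omega)).1 hM.2.2
    show cnt ι j (mfun j) = s + (if iotaFirst ι j < iotaFirst ι (ι r) then 1 else 0)
    rw [halt, hck]
    congr 1
    exact hs.symm
  · rw [betaForm, if_neg (show ¬ r = 0 by omega), ← hRdef]
    congr 1
    have hfilter : ∑ m ∈ Finset.Ioo r R, (A (ι r) (ι m) : ℚ) • Finsupp.single m (1:ℚ)
        = ∑ m ∈ (Finset.Ioo r R).filter (fun m => A (ι r) (ι m) < 0),
            (A (ι r) (ι m) : ℚ) • Finsupp.single m 1 := by
      symm
      apply Finset.sum_filter_of_ne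
      intro m hm hne0
      simp only [Finset.mem_Ioo] at hm
      by_contra hc
      have hm1 : 1 ≤ ι m := (hseq.1 m (by omega)).1
      have hmn : ι m ≤ n := (hseq.1 m (by omega)).2
      have hne' : ι m ≠ ι r := hmin m hm.1 hm.2
      have hle0 : A (ι r) (ι m) ≤ 0 :=
        hA.2.1 (ι r) (ι m) hk1 hkn hm1 hmn (fun h => hne' h.symm)
      have hz : A (ι r) (ι m) = 0 := by omega
      rw [hz] at hne0
      simp at hne0
    rw [hfilter]
    refine Finset.sum_bij' (fun m _ => ι m) (fun jj _ => mfun jj) ?_ ?_ ?_ ?_ ?_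
    · intro m hm
      simp only [Finset.mem_filter, Finset.mem_Ioo, Finset.mem_Icc] at hm ⊢
      have hm1 : 1 ≤ m := by omega
      exact ⟨⟨(hseq.1 m hm1).1, (hseq.1 m hm1).2⟩, hm.2⟩
    · intro jj hjj
      simp only [Finset.mem_filter, Finset.mem_Icc] at hjj
      obtain ⟨⟨h1, h2⟩, h3⟩ := hjj
      obtain ⟨hM, _⟩ := key jj h1 h2 h3
      simp only [Finset.mem_filter, Finset.mem_Ioo]
      refine ⟨⟨hM.1, hM.2.1⟩, ?_⟩
      rw [hM.2.2]; exact h3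
    · intro m hm
      simp only [Finset.mem_filter, Finset.mem_Ioo] at hm
      have hm1 : 1 ≤ m := by omega
      exact ((key (ι m) (hseq.1 m hm1).1 (hseq.1 m hm1).2 hm.2).2 m hm.1.1 hm.1.2 rfl).symm
    · intro jj hjj
      simp only [Finset.mem_filter, Finset.mem_Icc] at hjj
      exact (key jj hjj.1.1 hjj.1.2 hjj.2).1.2.2
    · intro m hm
      simp only [Finset.mem_filter, Finset.mem_Ioo] at hm
      have hm1 : 1 ≤ m := by omega
      exact congrArg (fun t => (A (ι r) (ι m) : ℚ) • Finsupp.single t (1:ℚ))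
        ((key (ι m) (hseq.1 m hm1).1 (hseq.1 m hm1).2 hm.2).2 m hm.1.1 hm.1.2 rfl)

end
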